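/- If X is a sequential SC space and Y is Hausdorff, then every preserving function f : X → Y is continuous. -/

import Mathlib

/-!
Since `X` is sequential it suffices to show `f (u n) → f x` whenever `u n → x`. The image under
`f` of the compact set `{x} ∪ {u n}` is compact, hence so is every tail; in a Hausdorff space this
forces every cluster point of `f ∘ u` other than `f x` to be a value taken infinitely often. So if
`f (u n) ↛ f x`, some value `q ≠ f x` is taken along a subsequence, and the SC property yields
connected sets `C k → x` whose images contain both `q` and `f x`. Each image, being connected in a
T1 space, meets a neighbourhood `Q` of `q` separated from `f x` in infinitely many points, so one
can pick `z k ∈ C k` with pairwise distinct values `f (z k) ∈ Q`. Then `z → x`, and the first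
observation produces a value taken infinitely often by `f ∘ z`, a contradiction.
-/

open Filter Topology

def Preserving {X Y : Type*} [TopologicalSpace X] [TopologicalSpace Y] (f : X → Y) : Prop :=
  (∀ K : Set X, IsCompact K → IsCompact (f '' K)) ∧
  (∀ C : Set X, IsPreconnected C → IsPreconnected (f '' C))

def SCPoint {X : Type*} [TopologicalSpace X] (x : X) : Prop :=
  ∀ u : ℕ → X, Tendsto u atTop (𝓝 x) →
    ∃ φ : ℕ → ℕ, StrictMono φ ∧ ∃ C : ℕ → Set X,
      (∀ k, IsPreconnected (C k) ∧ u (φ k) ∈ C k ∧ x ∈ C k) ∧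
      ∀ U ∈ 𝓝 x, ∀ᶠ k in atTop, C k ⊆ U

open Set Function

theorem IsPreconnected.infinite_inter_of_isOpen {Y : Type*} [TopologicalSpace Y] [T1Space Y]
    {S Q : Set Y} (hS : IsPreconnected S) (hQ : IsOpen Q) (hSQ : (S ∩ Q).Nonempty)
    (hSnQ : ¬ S ⊆ Q) : (S ∩ Q).Infinite := by
  intro hfin
  obtain ⟨p, hpS, hpQ⟩ := not_subset.1 hSnQ
  obtain ⟨y, hyS, hyQ, hy⟩ := hS Q (S ∩ Q)ᶜ hQ hfin.isClosed.isOpen_compl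
    (fun s _ => (em (s ∈ Q)).imp id fun hs h => hs h.2) hSQ ⟨p, hpS, fun h => hpQ h.2⟩
  exact hy ⟨hyS, hyQ⟩

theorem exists_injective_forall_mem {α : Type*} {T : ℕ → Set α} (hT : ∀ n, (T n).Infinite) :
    ∃ y : ℕ → α, Injective y ∧ ∀ n, y n ∈ T n := by
  classical
  choose g hgT hgs using fun n (s : Finset α) => (hT n).exists_notMem_finset s
  -- `F n` collects the values chosen before step `n`
  let F : ℕ → Finset α := fun n => Nat.rec ∅ (fun k s => insert (g k s) s) n
  have hF : Monotone F := monotone_nat_of_le_succ fun n => Finset.subset_insert _ _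
  refine ⟨fun n => g n (F n), Injective.of_lt_imp_ne fun m n hmn heq => ?_, fun n => hgT n _⟩
  exact hgs n (F n) (heq ▸ hF hmn (Finset.mem_insert_self _ _))

section CompactPreserving

variable {X Y : Type*} [TopologicalSpace X] [TopologicalSpace Y] [T2Space Y] {f : X → Y}
  {w : ℕ → X} {x : X}

theorem frequently_eq_of_mapClusterPt (hf : ∀ K : Set X, IsCompact K → IsCompact (f '' K))
    (hw : Tendsto w atTop (𝓝 x)) {c : Y} (hc : MapClusterPt c atTop (f ∘ w)) (hcx : c ≠ f x) :
    ∃ᶠ m in atTop, f (w m) = c := by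
  refine frequently_atTop.2 fun n => ?_
  have hKn : IsClosed (f '' insert x (range fun i => w (i + n))) :=
    (hf _ (hw.comp (tendsto_add_atTop_nat n)).isCompact_insert_range).isClosed
  have htail : (f ∘ w) '' Ici n ⊆ f '' insert x (range fun i => w (i + n)) := by
    rintro _ ⟨m, hm, rfl⟩
    exact ⟨w m, mem_insert_of_mem _ ⟨m - n, by simp only [Nat.sub_add_cancel hm]⟩, rfl⟩
  obtain ⟨t, ht, rfl⟩ :=
    hKn.closure_subset_iff.2 htail (mapClusterPt_atTop_iff_forall_mem_closure.1 hc n)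
  obtain rfl | ⟨i, rfl⟩ := ht
  · exact absurd rfl hcx
  · exact ⟨i + n, Nat.le_add_left n i, rfl⟩

theorem exists_mem_frequently_eq (hf : ∀ K : Set X, IsCompact K → IsCompact (f '' K))
    (hw : Tendsto w atTop (𝓝 x)) {Γ : Set Y} (hΓ : IsClosed Γ) (hxΓ : f x ∉ Γ)
    (hwΓ : ∀ m, f (w m) ∈ Γ) : ∃ c ∈ Γ, ∃ᶠ m in atTop, f (w m) = c := by
  obtain ⟨c, -, hc⟩ := (hf _ hw.isCompact_insert_range).exists_mapClusterPt (u := f ∘ w)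
    (f := atTop) (tendsto_principal.2 (Eventually.of_forall fun m =>
      mem_image_of_mem f (mem_insert_of_mem x (mem_range_self m))))
  have hcΓ : c ∈ Γ := hΓ.mem_of_mapClusterPt hc (Eventually.of_forall hwΓ)
  exact ⟨c, hcΓ, frequently_eq_of_mapClusterPt hf hw hc fun h => hxΓ (h ▸ hcΓ)⟩

theorem exists_subseq_eq_ne_of_not_tendsto (hf : ∀ K : Set X, IsCompact K → IsCompact (f '' K))
    (hw : Tendsto w atTop (𝓝 x)) (hfw : ¬ Tendsto (f ∘ w) atTop (𝓝 (f x))) :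
    ∃ ψ : ℕ → ℕ, StrictMono ψ ∧ ∃ q ≠ f x, ∀ k, f (w (ψ k)) = q := by
  obtain ⟨s, hs, hws⟩ := not_tendsto_iff_exists_frequently_notMem.1 hfw
  obtain ⟨ψ, hψ, hψs⟩ := extraction_of_frequently_atTop hws
  obtain ⟨q, hq, hqψ⟩ := exists_mem_frequently_eq hf (hw.comp hψ.tendsto_atTop)
    isOpen_interior.isClosed_compl (not_not.2 (mem_interior_iff_mem_nhds.2 hs))
    fun k hk => hψs k (interior_subset hk)
  obtain ⟨σ, hσ, hσq⟩ := extraction_of_frequently_atTop hqψ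
  exact ⟨ψ ∘ σ, hψ.comp hσ, q, fun h => hq (h ▸ mem_interior_iff_mem_nhds.2 hs), hσq⟩

end CompactPreserving

theorem stmt14 {X Y : Type*} [TopologicalSpace X] [TopologicalSpace Y]
    [SequentialSpace X] [T2Space Y]
    (hSC : ∀ x : X, SCPoint x)
    (f : X → Y) (hf : Preserving f) : Continuous f := by
  refine continuous_iff_seqContinuous.2 fun u x hu => by_contra fun hfu => ?_
  obtain ⟨ψ, hψ, q, hqx, hψq⟩ := exists_subseq_eq_ne_of_not_tendsto hf.1 hu hfu
  obtain ⟨φ, -, C, hC, hCx⟩ := hSC x (u ∘ ψ) (hu.comp hψ.tendsto_atTop)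
  obtain ⟨Q, P, hQ, hP, hqQ, hxP, hQP⟩ := t2_separation hqx
  have hinf : ∀ k, (f '' C k ∩ Q).Infinite := fun k =>
    (hf.2 _ (hC k).1).infinite_inter_of_isOpen hQ ⟨q, ⟨_, (hC k).2.1, hψq _⟩, hqQ⟩
      fun h => disjoint_left.1 hQP (h ⟨x, (hC k).2.2, rfl⟩) hxP
  obtain ⟨y, hy_inj, hy⟩ := exists_injective_forall_mem hinf
  choose z hzC hzy using fun k => (hy k).1
  have hz : Tendsto z atTop (𝓝 x) := fun U hU => (hCx U hU).mono fun k hk => hk (hzC k)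
  obtain ⟨c, -, hc⟩ := exists_mem_frequently_eq hf.1 hz hP.isClosed_compl (not_not.2 hxP)
    fun k => disjoint_left.1 hQP (hzy k ▸ (hy k).2)
  simp only [hzy] at hc
  exact Nat.frequently_atTop_iff_infinite.1 hc ((finite_singleton c).preimage hy_inj.injOn)
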